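/- arXiv:0709.0013 — 3 statements merged into one kernel-verified Lean document; each statement's English description precedes it below -/
import Mathlib

section
/- Let D = A + iK with A selfadjoint and K bounded selfadjoint. If H' is a closed subspace reducing D (i.e., reducing both A and K) on which the restriction of D is selfadjoint, then H' ⊆ (⋁_{t∈ℝ} e^{iAt}Ran K)^⊥. In particular, K vanishes on H'. -/
/-! Since `P` commutes with `K`, the subspace `H'` is `K`-invariant, and a complex operator whose
quadratic form vanishes on an invariant subspace vanishes there by polarization; so `K = 0` on
`H'`, and by selfadjointness `Ran K ⊆ H'ᗮ`. Since `P` also commutes with every `U t`, hence with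
`(U t)⁻¹ = (U t)*`, the closed subspace `H'ᗮ` is invariant under every `U t`, so it contains the
closed span of `⋃ₜ U t (Ran K)`. -/

open Set Submodule

theorem LinearMap.IsProj.mapsTo_of_semiconj {R M F : Type*} [Semiring R] [AddCommMonoid M]
    [Module R M] [FunLike F M M] {m : Submodule R M} {P : F} (hP : IsProj m P) {T : M → M}
    (hPT : Function.Semiconj P T T) : MapsTo T m m := fun x hx => by
  rw [← hP.map_id x hx, ← hPT x]
  exact hP.map_mem (T x)

theorem Submodule.topologicalClosure_span_iUnion_image_le {R M ι : Type*} [Semiring R]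
    [AddCommMonoid M] [Module R M] [TopologicalSpace M] [ContinuousAdd M]
    [ContinuousConstSMul R M] {V : Submodule R M} (hV : IsClosed (V : Set M)) {s : Set M}
    (hs : s ⊆ V) {U : ι → M → M} (hU : ∀ i, MapsTo (U i) V V) :
    (span R (⋃ i, U i '' s)).topologicalClosure ≤ V :=
  topologicalClosure_minimal _
    (span_le.mpr (iUnion_subset fun i => ((hU i).mono_left hs).image_subset)) hV

section InnerProduct

variable {𝕜 E : Type*} [RCLike 𝕜] [NormedAddCommGroup E] [InnerProductSpace 𝕜 E]

theorem Submodule.mapsTo_orthogonal_of_mapsTo_symm {V : Submodule 𝕜 E} {e : E ≃ₗᵢ[𝕜] E}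
    (he : MapsTo e.symm V V) : MapsTo e Vᗮ Vᗮ := fun x hx => by
  rw [SetLike.mem_coe, mem_orthogonal']
  intro u hu
  rw [LinearIsometryEquiv.inner_map_eq_flip]
  exact inner_left_of_mem_orthogonal (he hu) hx

theorem IsSelfAdjoint.range_subset_orthogonal [CompleteSpace E] {T : E →L[𝕜] E}
    (hT : IsSelfAdjoint T) {V : Submodule 𝕜 E} (hV : ∀ x ∈ V, T x = 0) : range T ⊆ Vᗮ := by
  rintro _ ⟨w, rfl⟩
  rw [SetLike.mem_coe, mem_orthogonal]
  intro x hx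
  rw [← ContinuousLinearMap.adjoint_inner_left, hT.adjoint_eq, hV x hx, inner_zero_left]

end InnerProduct

theorem LinearMap.eq_zero_on_of_inner_apply_self_eq_zero {E : Type*} [NormedAddCommGroup E]
    [InnerProductSpace ℂ E] {T : E →ₗ[ℂ] E} {V : Submodule ℂ E} (hTV : MapsTo T V V)
    (hT : ∀ x ∈ V, inner ℂ (T x) x = 0) : ∀ x ∈ V, T x = 0 := fun x hx => by
  have hrestrict : T.restrict hTV = 0 := (inner_map_self_eq_zero _).mp fun y => hT y y.2
  exact congrArg Subtype.val (LinearMap.congr_fun hrestrict ⟨x, hx⟩)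

theorem reducing_selfadjoint_subspace_subset_perp_general
    {H : Type*} [NormedAddCommGroup H] [InnerProductSpace ℂ H] [CompleteSpace H]
    (U : ℝ → (H ≃ₗᵢ[ℂ] H))
    (K : H →L[ℂ] H) (hK : IsSelfAdjoint K)
    (H' : Submodule ℂ H)
    (P : H →L[ℂ] H)
    (hPran : ∀ x : H, P x ∈ H') (hPid : ∀ x ∈ H', P x = x)
    (hPU : ∀ (t : ℝ) (x : H), P ((U t) x) = (U t) (P x))
    (hPK : ∀ x : H, P (K x) = K (P x))
    (hsa : ∀ x ∈ H', (inner ℂ (K x) x : ℂ) = 0) :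
    (H' : Set H) ⊆
      (((Submodule.span ℂ (⋃ t : ℝ, (U t) '' Set.range K)).topologicalClosure)ᗮ : Submodule ℂ H)
      ∧ ∀ x ∈ H', K x = 0 := by
  have hP : LinearMap.IsProj H' P := ⟨hPran, hPid⟩
  have hK0 : ∀ x ∈ H', K x = 0 :=
    LinearMap.eq_zero_on_of_inner_apply_self_eq_zero (T := (K : H →ₗ[ℂ] H))
      (hP.mapsTo_of_semiconj hPK) hsa
  refine ⟨?_, hK0⟩
  have hUinv (t : ℝ) : MapsTo (U t) H'ᗮ H'ᗮ :=
    mapsTo_orthogonal_of_mapsTo_symm <| hP.mapsTo_of_semiconj <|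
      Function.Semiconj.inverses_right (hPU t) (U t).apply_symm_apply (U t).symm_apply_apply
  have hspan : _ ≤ H'ᗮ := topologicalClosure_span_iUnion_image_le H'.isClosed_orthogonal
    (hK.range_subset_orthogonal hK0) hUinv
  exact (IsOrtho.symm hspan : H' ≤ _)

/-- If a closed subspace `H'` reduces `D = A + iK` (its orthogonal projection `P`
commutes with the unitary group of `A` and with `K`) and the restriction of `D` to `H'` is
selfadjoint (equivalently, the imaginary part of its quadratic form vanishes:
`⟪Kx, x⟫ = 0` on `H'`), then `H' ⊆ (⋁_{t∈ℝ} e^{iAt} Ran K)ᗮ`; in particular `K` vanishes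
on `H'`. -/
theorem reducing_selfadjoint_subspace_subset_perp
    {H : Type*} [NormedAddCommGroup H] [InnerProductSpace ℂ H] [CompleteSpace H]
    (U : ℝ → (H ≃ₗᵢ[ℂ] H))
    (hU0 : U 0 = LinearIsometryEquiv.refl ℂ H)
    (hUgrp : ∀ s t : ℝ, U (s + t) = (U t).trans (U s))
    (K : H →L[ℂ] H) (hK : IsSelfAdjoint K)
    (H' : Submodule ℂ H) (hclosed : IsClosed (H' : Set H))
    (P : H →L[ℂ] H) (hPsa : IsSelfAdjoint P)
    (hPran : ∀ x : H, P x ∈ H') (hPid : ∀ x ∈ H', P x = x)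
    (hPU : ∀ (t : ℝ) (x : H), P ((U t) x) = (U t) (P x))
    (hPK : ∀ x : H, P (K x) = K (P x))
    (hsa : ∀ x ∈ H', (inner ℂ (K x) x : ℂ) = 0) :
    (H' : Set H) ⊆
      (((Submodule.span ℂ (⋃ t : ℝ, (U t) '' Set.range K)).topologicalClosure)ᗮ : Submodule ℂ H)
      ∧ ∀ x ∈ H', K x = 0 :=
  reducing_selfadjoint_subspace_subset_perp_general U K hK H' P hPran hPid hPU hPK hsa
end

section
/- Let a > 0 and let g ∈ L²(ℝ²) vanish for |q| < a. Then the function (q,x) ↦ (ℱg)(q, -xq), where ℱ is the Fourier transform in the second variable, belongs to L²(ℝ²) and its L² norm is at most a^{-1/2} times the L² norm of g. -/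
open MeasureTheory Complex Real

/-!
For fixed `q`, the function `x ↦ (ℱg)(q, -xq)` is the dilation by `-q` of the unitary Fourier
transform of the slice `g(q, ·)`, so its squared `L²` norm is `|q|⁻¹` times that of `g(q, ·)` by
Plancherel. Slices with `|q| < a` vanish and `|q|⁻¹ ≤ a⁻¹` on the others; Tonelli sums the slice
estimates over `q`.
-/

open FourierTransform SchwartzMap
open scoped ENNReal

theorem MeasureTheory.lintegral_enorm_sq_eq_eLpNorm_sq {α E : Type*} [MeasurableSpace α]
    {μ : Measure α} [NormedAddCommGroup E] (f : α → E) :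
    ∫⁻ x, ‖f x‖ₑ ^ 2 ∂μ = eLpNorm f 2 μ ^ 2 := by
  simpa only [NNReal.coe_ofNat, ENNReal.rpow_two, ENNReal.coe_ofNat] using
    (eLpNorm_nnreal_pow_eq_lintegral (f := f) (μ := μ) (p := 2) two_ne_zero).symm

theorem MeasureTheory.memLp_two_iff_lintegral_enorm_sq_lt_top {α E : Type*} [MeasurableSpace α]
    {μ : Measure α} [NormedAddCommGroup E] {f : α → E} (hf : AEStronglyMeasurable f μ) :
    MemLp f 2 μ ↔ ∫⁻ x, ‖f x‖ₑ ^ 2 ∂μ < ∞ := by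
  simp [MemLp, hf, lintegral_enorm_sq_eq_eLpNorm_sq]

section Plancherel

variable {V F : Type*} [NormedAddCommGroup V] [InnerProductSpace ℝ V] [FiniteDimensional ℝ V]
  [MeasurableSpace V] [BorelSpace V] [NormedAddCommGroup F] [InnerProductSpace ℂ F]
  [CompleteSpace F]

/-- Both sides define the same tempered distribution. -/
theorem MeasureTheory.Lp.fourier_toLp_ae_eq {f : V → F} (hf1 : Integrable f) (hf2 : MemLp f 2) :
    ((𝓕 (hf2.toLp f) : Lp F 2 volume) : V → F) =ᵐ[volume] 𝓕 f := by
  refine ae_eq_of_integral_contDiff_smul_eq ((Lp.memLp _).locallyIntegrable one_le_two)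
    (VectorFourier.fourierIntegral_continuous Real.continuous_fourierChar continuous_inner
      hf1).locallyIntegrable fun g hg hgc => ?_
  set φ : 𝓢(V, ℂ) := (hgc.comp_left (g := Complex.ofRealCLM) rfl).toSchwartzMap
    (Complex.ofRealCLM.contDiff.comp hg)
  have pairing : ∀ h : V → F, ∫ x, g x • h x = ∫ x, φ x • h x := fun h => by
    simp [φ, Complex.coe_smul]
  calc ∫ x, g x • ((𝓕 (hf2.toLp f) : Lp F 2 volume) : V → F) x
      = ((𝓕 (hf2.toLp f) : Lp F 2 volume) : 𝓢'(V, F)) φ := by rw [pairing]; simp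
    _ = (hf2.toLp f : 𝓢'(V, F)) (𝓕 φ) := by rw [← Lp.fourier_toTemperedDistribution_eq]; rfl
    _ = ∫ x, 𝓕 φ x • f x := by
      rw [Lp.toTemperedDistribution_apply]
      exact integral_congr_ae (hf2.coeFn_toLp.mono fun x hx => by simp only [hx])
    _ = ∫ x, φ x • 𝓕 f x := by
      simpa using! VectorFourier.integral_fourierIntegral_smul_eq_flip (L := innerₗ V)
        Real.continuous_fourierChar continuous_inner (φ.integrable (μ := volume)) hf1
    _ = ∫ x, g x • 𝓕 f x := (pairing _).symm

theorem lintegral_enorm_fourier_sq {f : V → F} (hf1 : Integrable f) (hf2 : MemLp f 2) :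
    ∫⁻ ξ, ‖𝓕 f ξ‖ₑ ^ 2 = ∫⁻ x, ‖f x‖ₑ ^ 2 := by
  set f₂ : Lp F 2 volume := hf2.toLp f
  calc ∫⁻ ξ, ‖𝓕 f ξ‖ₑ ^ 2 = ‖(𝓕 f₂ : Lp F 2 volume)‖ₑ ^ 2 := by
        rw [lintegral_enorm_sq_eq_eLpNorm_sq, Lp.enorm_def,
          eLpNorm_congr_ae (Lp.fourier_toLp_ae_eq hf1 hf2)]
    _ = ‖f₂‖ₑ ^ 2 := by rw [← ofReal_norm, Lp.norm_fourier_eq, ofReal_norm]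
    _ = ∫⁻ x, ‖f x‖ₑ ^ 2 := by
        rw [lintegral_enorm_sq_eq_eLpNorm_sq, Lp.enorm_def, eLpNorm_congr_ae hf2.coeFn_toLp]

end Plancherel

theorem Real.lintegral_comp_mul_left (f : ℝ → ℝ≥0∞) {c : ℝ} (hc : c ≠ 0) :
    ∫⁻ x, f (c * x) = ENNReal.ofReal |c⁻¹| * ∫⁻ x, f x := by
  have h := lintegral_map_equiv f (MeasurableEquiv.mulLeft₀ c hc) (μ := volume)
  rw [MeasurableEquiv.coe_mulLeft₀, Real.map_volume_mul_left hc, lintegral_smul_measure] at h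
  exact h.symm

noncomputable def unitaryFourierIntegral (f : ℝ → ℂ) (p : ℝ) : ℂ :=
  ((√(2 * π) : ℝ) : ℂ)⁻¹ * ∫ s : ℝ, cexp (-(I * s * p)) * f s

theorem unitaryFourierIntegral_eq_fourier (f : ℝ → ℂ) (p : ℝ) :
    unitaryFourierIntegral f p = ((√(2 * π) : ℝ) : ℂ)⁻¹ * 𝓕 f ((2 * π)⁻¹ * p) := by
  rw [unitaryFourierIntegral, Real.fourier_real_eq_integral_exp_smul]
  congr 2 with s
  rw [smul_eq_mul]
  congr 1
  push_cast
  field_simp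

theorem unitaryFourierIntegral_congr_ae {f₁ f₂ : ℝ → ℂ} (h : f₁ =ᵐ[volume] f₂) :
    unitaryFourierIntegral f₁ = unitaryFourierIntegral f₂ := by
  ext p
  rw [unitaryFourierIntegral, unitaryFourierIntegral, integral_congr_ae]
  filter_upwards [h] with s hs
  rw [hs]

theorem lintegral_enorm_unitaryFourierIntegral_sq {f : ℝ → ℂ} (hf1 : Integrable f)
    (hf2 : MemLp f 2) :
    ∫⁻ p, ‖unitaryFourierIntegral f p‖ₑ ^ 2 = ∫⁻ s, ‖f s‖ₑ ^ 2 := by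
  have h2π : (0 : ℝ) < 2 * π := by positivity
  have hc : ‖((√(2 * π) : ℝ) : ℂ)⁻¹‖ₑ ^ 2 = ENNReal.ofReal |((2 * π)⁻¹)⁻¹|⁻¹ := by
    rw [← ofReal_norm, ← ENNReal.ofReal_pow (norm_nonneg _), norm_inv, Complex.norm_real,
      Real.norm_of_nonneg (Real.sqrt_nonneg _), inv_pow, Real.sq_sqrt h2π.le, inv_inv,
      abs_of_pos h2π]
  simp_rw [unitaryFourierIntegral_eq_fourier, enorm_mul, mul_pow]
  rw [lintegral_const_mul' _ _ (ENNReal.pow_ne_top enorm_ne_top), hc,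
    Real.lintegral_comp_mul_left (fun ξ => ‖𝓕 f ξ‖ₑ ^ 2) (inv_ne_zero h2π.ne'),
    lintegral_enorm_fourier_sq hf1 hf2, ← mul_assoc, ← ENNReal.ofReal_mul (by positivity),
    inv_mul_cancel₀ (by positivity), ENNReal.ofReal_one, one_mul]

theorem lintegral_enorm_unitaryFourierIntegral_sq_le {f : ℝ → ℂ} (hf : Integrable f) :
    ∫⁻ p, ‖unitaryFourierIntegral f p‖ₑ ^ 2 ≤ ∫⁻ s, ‖f s‖ₑ ^ 2 := by
  by_cases hf2 : MemLp f 2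
  · exact (lintegral_enorm_unitaryFourierIntegral_sq hf hf2).le
  · rw [memLp_two_iff_lintegral_enorm_sq_lt_top hf.1, not_lt, top_le_iff] at hf2
    simp [hf2]

theorem lintegral_enorm_unitaryFourierIntegral_comp_mul_sq_le {f : ℝ → ℂ} (hf : Integrable f)
    {c : ℝ} (hc : c ≠ 0) :
    ∫⁻ x, ‖unitaryFourierIntegral f (c * x)‖ₑ ^ 2 ≤ ENNReal.ofReal |c|⁻¹ * ∫⁻ s, ‖f s‖ₑ ^ 2 := by
  rw [Real.lintegral_comp_mul_left (fun p => ‖unitaryFourierIntegral f p‖ₑ ^ 2) hc, abs_inv]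
  exact mul_le_mul' le_rfl (lintegral_enorm_unitaryFourierIntegral_sq_le hf)

theorem lintegral_enorm_unitaryFourierIntegral_comp_mul_sq_le_of_abs_lt_imp
    {f : ℝ → ℂ} (hf : Integrable f) {a c : ℝ} (ha : 0 < a) (hf0 : |c| < a → f =ᵐ[volume] 0) :
    ∫⁻ x, ‖unitaryFourierIntegral f (c * x)‖ₑ ^ 2 ≤ ENNReal.ofReal a⁻¹ * ∫⁻ s, ‖f s‖ₑ ^ 2 := by
  rcases lt_or_ge |c| a with hca | hac
  · rw [unitaryFourierIntegral_congr_ae (hf0 hca)]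
    simp [unitaryFourierIntegral]
  · refine (lintegral_enorm_unitaryFourierIntegral_comp_mul_sq_le hf
      (abs_pos.mp (ha.trans_le hac))).trans ?_
    gcongr

theorem aestronglyMeasurable_unitaryFourierIntegral_comp {g : ℝ × ℝ → ℂ}
    (hg : AEStronglyMeasurable g volume) {φ : ℝ × ℝ → ℝ} (hφ : Measurable φ) :
    AEStronglyMeasurable (fun z => unitaryFourierIntegral (fun s => g (z.1, s)) (φ z)) volume := by
  have hmk : StronglyMeasurable
      (fun z : ℝ × ℝ => unitaryFourierIntegral (fun s => hg.mk g (z.1, s)) (φ z)) := by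
    refine stronglyMeasurable_const.mul (StronglyMeasurable.integral_prod_right'
      (f := fun w : (ℝ × ℝ) × ℝ => cexp (-(I * w.2 * φ w.1)) * hg.mk g (w.1.1, w.2)) ?_)
    exact (Measurable.stronglyMeasurable (by fun_prop)).mul
      (hg.stronglyMeasurable_mk.comp_measurable (by fun_prop))
  refine hmk.aestronglyMeasurable.congr ?_
  have hslices : ∀ᵐ q : ℝ, (fun s => hg.mk g (q, s)) =ᵐ[volume] fun s => g (q, s) :=
    Measure.ae_ae_of_ae_prod (μ := volume) (ν := volume) hg.ae_eq_mk.symm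
  filter_upwards [(Measure.quasiMeasurePreserving_fst (μ := volume) (ν := volume)).ae hslices]
    with z hz
  rw [unitaryFourierIntegral_congr_ae hz]

/-- if `g ∈ L²(ℝ²)` vanishes for `|q| < a` and `G` is the Fourier
transform of `g` in the second variable, then `(q,x) ↦ G(q, -xq)` is in `L²(ℝ²)`
with squared norm at most `a⁻¹` times the squared norm of `g`. -/
theorem fourier_substitution_bound (a : ℝ) (ha : 0 < a)
    (g : ℝ × ℝ → ℂ) (hg : MemLp g 2 (volume : Measure (ℝ × ℝ)))
    (hg1 : ∀ q : ℝ, Integrable (fun s => g (q, s)))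
    (hsupp : ∀ᵐ z : ℝ × ℝ, |z.1| < a → g z = 0)
    (G : ℝ × ℝ → ℂ)
    (hG : ∀ q p : ℝ, G (q, p) =
      ((Real.sqrt (2 * π) : ℝ) : ℂ)⁻¹ * ∫ s : ℝ, Complex.exp (-(Complex.I * s * p)) * g (q, s)) :
    MemLp (fun z : ℝ × ℝ => G (z.1, -z.2 * z.1)) 2 (volume : Measure (ℝ × ℝ)) ∧
    ∫⁻ z : ℝ × ℝ, ENNReal.ofReal (‖G (z.1, -z.2 * z.1)‖ ^ 2) ≤
      ENNReal.ofReal a⁻¹ * ∫⁻ z : ℝ × ℝ, ENNReal.ofReal (‖g z‖ ^ 2) := by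
  have hG' : ∀ z : ℝ × ℝ,
      G (z.1, -z.2 * z.1) = unitaryFourierIntegral (fun s => g (z.1, s)) (-z.1 * z.2) := by
    intro z
    rw [hG, unitaryFourierIntegral, show -z.2 * z.1 = -z.1 * z.2 by ring]
  have hslice : ∀ᵐ q : ℝ, ∫⁻ x, ‖unitaryFourierIntegral (fun s => g (q, s)) (-q * x)‖ₑ ^ 2 ≤
      ENNReal.ofReal a⁻¹ * ∫⁻ s, ‖g (q, s)‖ₑ ^ 2 := by
    filter_upwards [Measure.ae_ae_of_ae_prod (μ := volume) (ν := volume) hsupp] with q hq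
    exact lintegral_enorm_unitaryFourierIntegral_comp_mul_sq_le_of_abs_lt_imp (hg1 q) ha
      fun hqa => hq.mono fun s hs => hs (abs_neg q ▸ hqa)
  have hle : ∫⁻ z : ℝ × ℝ, ‖G (z.1, -z.2 * z.1)‖ₑ ^ 2 ≤
      ENNReal.ofReal a⁻¹ * ∫⁻ z : ℝ × ℝ, ‖g z‖ₑ ^ 2 := by
    simp only [hG']
    calc _ ≤ ∫⁻ q, ∫⁻ x, ‖unitaryFourierIntegral (fun s => g (q, s)) (-q * x)‖ₑ ^ 2 :=
          lintegral_prod_le (μ := volume) (ν := volume) _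
      _ ≤ ∫⁻ q, ENNReal.ofReal a⁻¹ * ∫⁻ s, ‖g (q, s)‖ₑ ^ 2 := lintegral_mono_ae hslice
      _ = ENNReal.ofReal a⁻¹ * ∫⁻ z : ℝ × ℝ, ‖g z‖ₑ ^ 2 := by
          rw [lintegral_const_mul' _ _ ENNReal.ofReal_ne_top, Measure.volume_eq_prod,
            lintegral_prod _ (hg.1.enorm.pow_const 2)]
  have hmeas : AEStronglyMeasurable (fun z : ℝ × ℝ => G (z.1, -z.2 * z.1)) volume :=
    funext hG' ▸ aestronglyMeasurable_unitaryFourierIntegral_comp hg.1 (by fun_prop)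
  simp only [ENNReal.ofReal_pow (norm_nonneg _), ofReal_norm]
  refine ⟨(memLp_two_iff_lintegral_enorm_sq_lt_top hmeas).mpr (hle.trans_lt ?_), hle⟩
  exact ENNReal.mul_lt_top ENNReal.ofReal_lt_top
    ((memLp_two_iff_lintegral_enorm_sq_lt_top hg.1).mp hg)
end

section
/- For the function w(z) = 1/(1 - √((z-1)/(z+1))) with the branch of the square root analytic off (-∞,-1]∪[1,∞) and satisfying Im √((z-1)/(z+1)) > 0, the following asymptotics hold uniformly in arg z as |z| → ∞: w(z) = z + O(1) for Im z > 0, and w(z) = O(1) for Im z < 0. -/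
/-!
Writing `s = √((z-1)/(z+1))`, the relation `s² (z+1) = z-1` gives `(1-s)(1+s)(z+1) = 2`, so
`w = 1/(1-s) = (1+s)(z+1)/2`. Comparing imaginary parts, `Re s · Im s = Im z / |z+1|²`, and since
`Im s > 0` the sign of `Re s` is that of `Im z`. In the upper half-plane `|1+s| ≥ 1`, hence
`|(1-s)(z+1)| ≤ 2` and `w - z = 1 - (1-s)(z+1)/2` is bounded; in the lower half-plane `|1-s| ≥ 1`,
hence `|w| = |(1+s)(z+1)|/2 ≤ 1`.
-/

open Complex

namespace Complex

theorem im_sq (s : ℂ) : (s ^ 2).im = 2 * (s.re * s.im) := by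
  simp only [sq, mul_im]; ring

theorem im_sub_one_div_add_one (z : ℂ) :
    ((z - 1) / (z + 1)).im = 2 * (z.im / normSq (z + 1)) := by
  simp only [div_im, sub_re, sub_im, add_re, add_im, one_re, one_im]
  ring

theorem add_one_ne_zero_of_im_ne_zero {z : ℂ} (hz : z.im ≠ 0) : z + 1 ≠ 0 := fun h =>
  hz (by simpa using congrArg im h)

theorem one_le_norm_one_add_of_nonneg_re {s : ℂ} (hs : 0 ≤ s.re) : 1 ≤ ‖1 + s‖ :=
  calc (1 : ℝ) ≤ (1 + s).re := by simpa using hs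
    _ ≤ ‖1 + s‖ := re_le_norm _

theorem one_le_norm_one_sub_of_re_nonpos {s : ℂ} (hs : s.re ≤ 0) : 1 ≤ ‖1 - s‖ :=
  calc (1 : ℝ) ≤ (1 - s).re := by simpa using hs
    _ ≤ ‖1 - s‖ := re_le_norm _

end Complex

section SqrtRatio

variable {s z : ℂ}

theorem re_mul_im_of_sq_eq (hs : s ^ 2 = (z - 1) / (z + 1)) :
    s.re * s.im = z.im / normSq (z + 1) := by
  have h := congrArg im hs
  rw [im_sq, im_sub_one_div_add_one] at h
  exact mul_left_cancel₀ two_ne_zero h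

theorem re_pos_of_sq_eq (hs : s ^ 2 = (z - 1) / (z + 1)) (hsim : 0 < s.im) (hz : 0 < z.im) :
    0 < s.re := by
  refine pos_of_mul_pos_left ?_ hsim.le
  rw [re_mul_im_of_sq_eq hs]
  exact div_pos hz (normSq_pos.2 (add_one_ne_zero_of_im_ne_zero hz.ne'))

theorem re_neg_of_sq_eq (hs : s ^ 2 = (z - 1) / (z + 1)) (hsim : 0 < s.im) (hz : z.im < 0) :
    s.re < 0 := by
  refine neg_of_mul_neg_left ?_ hsim.le
  rw [re_mul_im_of_sq_eq hs]
  exact div_neg_of_neg_of_pos hz (normSq_pos.2 (add_one_ne_zero_of_im_ne_zero hz.ne))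

variable (hs : s ^ 2 = (z - 1) / (z + 1)) (hz : z + 1 ≠ 0)
include hs hz

theorem one_sub_mul_one_add_mul_add_one_of_sq_eq : (1 - s) * (1 + s) * (z + 1) = 2 := by
  rw [show (1 - s) * (1 + s) * (z + 1) = (z + 1) - s ^ 2 * (z + 1) by ring, hs,
    div_mul_cancel₀ _ hz]
  ring

theorem one_div_one_sub_of_sq_eq : 1 / (1 - s) = (1 + s) * (z + 1) / 2 := by
  have h := one_sub_mul_one_add_mul_add_one_of_sq_eq hs hz
  have h1s : 1 - s ≠ 0 := fun h0 => by simp [h0] at h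
  field_simp
  linear_combination -h

theorem norm_one_div_one_sub_sub_le_of_sq_eq (hre : 0 ≤ s.re) : ‖1 / (1 - s) - z‖ ≤ 2 := by
  have hprod : ‖(1 - s) * (z + 1)‖ ≤ 2 := by
    calc ‖(1 - s) * (z + 1)‖ ≤ ‖1 + s‖ * ‖(1 - s) * (z + 1)‖ :=
          le_mul_of_one_le_left (norm_nonneg _) (one_le_norm_one_add_of_nonneg_re hre)
      _ = 2 := by
          rw [← norm_mul, mul_left_comm, ← mul_assoc,
            one_sub_mul_one_add_mul_add_one_of_sq_eq hs hz]
          norm_num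
  calc ‖1 / (1 - s) - z‖ = ‖1 - (1 - s) * (z + 1) / 2‖ := by
        rw [one_div_one_sub_of_sq_eq hs hz]; ring_nf
    _ ≤ ‖(1 : ℂ)‖ + ‖(1 - s) * (z + 1) / 2‖ := norm_sub_le _ _
    _ ≤ 2 := by rw [norm_one, norm_div, RCLike.norm_ofNat]; linarith

theorem norm_one_div_one_sub_le_of_sq_eq (hre : s.re ≤ 0) : ‖1 / (1 - s)‖ ≤ 1 := by
  have hprod : ‖(1 + s) * (z + 1)‖ ≤ 2 := by
    calc ‖(1 + s) * (z + 1)‖ ≤ ‖1 - s‖ * ‖(1 + s) * (z + 1)‖ :=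
          le_mul_of_one_le_left (norm_nonneg _) (one_le_norm_one_sub_of_re_nonpos hre)
      _ = 2 := by
          rw [← norm_mul, ← mul_assoc, one_sub_mul_one_add_mul_add_one_of_sq_eq hs hz]
          norm_num
  rw [one_div_one_sub_of_sq_eq hs hz, norm_div, RCLike.norm_ofNat]
  linarith

end SqrtRatio

theorem w_asymptotics_general (sq : ℂ → ℂ)
    (hsq2 : ∀ z : ℂ, (sq z) ^ 2 = (z - 1) / (z + 1))
    (hsqim : ∀ z : ℂ, ¬(z.im = 0 ∧ 1 ≤ |z.re|) → 0 < (sq z).im) :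
    ∃ C R : ℝ, ∀ z : ℂ, R ≤ ‖z‖ →
      (0 < z.im → ‖1 / (1 - sq z) - z‖ ≤ C) ∧
      (z.im < 0 → ‖1 / (1 - sq z)‖ ≤ C) := by
  have hsqim_of_im_ne_zero : ∀ z : ℂ, z.im ≠ 0 → 0 < (sq z).im := fun z hz =>
    hsqim z fun h => hz h.1
  refine ⟨2, 0, fun z _ => ⟨fun hz => ?_, fun hz => ?_⟩⟩
  · exact norm_one_div_one_sub_sub_le_of_sq_eq (hsq2 z) (add_one_ne_zero_of_im_ne_zero hz.ne')
      (re_pos_of_sq_eq (hsq2 z) (hsqim_of_im_ne_zero z hz.ne') hz).le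
  · calc ‖1 / (1 - sq z)‖ ≤ 1 :=
          norm_one_div_one_sub_le_of_sq_eq (hsq2 z) (add_one_ne_zero_of_im_ne_zero hz.ne)
            (re_neg_of_sq_eq (hsq2 z) (hsqim_of_im_ne_zero z hz.ne) hz).le
      _ ≤ 2 := one_le_two

/-- for `w(z) = 1/(1 - √((z-1)/(z+1)))` with the branch of the square
root analytic off `(-∞,-1] ∪ [1,∞)` and `Im √((z-1)/(z+1)) > 0`, uniformly in `arg z`
as `|z| → ∞`: `w(z) = z + O(1)` for `Im z > 0` and `w(z) = O(1)` for `Im z < 0`. -/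
theorem w_asymptotics (sq : ℂ → ℂ)
    (hsqan : DifferentiableOn ℂ sq {z : ℂ | ¬(z.im = 0 ∧ 1 ≤ |z.re|)})
    (hsq2 : ∀ z : ℂ, (sq z) ^ 2 = (z - 1) / (z + 1))
    (hsqim : ∀ z : ℂ, ¬(z.im = 0 ∧ 1 ≤ |z.re|) → 0 < (sq z).im) :
    ∃ C R : ℝ, ∀ z : ℂ, R ≤ ‖z‖ →
      (0 < z.im → ‖1 / (1 - sq z) - z‖ ≤ C) ∧
      (z.im < 0 → ‖1 / (1 - sq z)‖ ≤ C) :=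
  w_asymptotics_general sq hsq2 hsqim
end
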